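/- arXiv:1704.05666 — 2 statements merged into one kernel-verified Lean document; each statement's English description precedes it below -/
import Mathlib

section
/- Let λ₁, λ₂, λ₃ be distinct real numbers and λ₄ = ∞, and define the λ-dependent one-form α_λ = (λ-λ₂)(λ-λ₃) f₁ dp₁ + (λ-λ₁)(λ-λ₃) f₂ dp₂ + (λ-λ₁)(λ-λ₂) f₃ dp₃ on ℝ³, where f : ℝ³ → ℝ is smooth with partial derivatives fᵢ. Then α_λ ∧ dα_λ = 0 holds for all λ ∈ ℝ if and only if f satisfies the Hirota equation (λ₂-λ₃) f₁ f₂₃ + (λ₃-λ₁) f₂ f₁₃ + (λ₁-λ₂) f₃ f₁₂ = 0. -/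
/-- Partial derivative of a function on `ℝ³` in the `i`-th coordinate direction. -/
noncomputable def pd (i : Fin 3) (f : (Fin 3 → ℝ) → ℝ) (p : Fin 3 → ℝ) : ℝ :=
  fderiv ℝ f p (Pi.single i 1)

lemma pd_contDiff (i : Fin 3) {f : (Fin 3 → ℝ) → ℝ} (hf : ContDiff ℝ (⊤ : ℕ∞) f) :
    ContDiff ℝ (⊤ : ℕ∞) (pd i f) := by
  unfold pd
  exact (hf.fderiv_right (by simp)).clm_apply contDiff_const

lemma pd_const_mul (i : Fin 3) (k : ℝ) {g : (Fin 3 → ℝ) → ℝ} (hg : Differentiable ℝ g)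
    (p : Fin 3 → ℝ) : pd i (fun x => k * g x) p = k * pd i g p := by
  unfold pd
  rw [fderiv_const_mul (hg p)]
  simp

lemma pd_comm {f : (Fin 3 → ℝ) → ℝ} (hf : ContDiff ℝ (⊤ : ℕ∞) f) (i j : Fin 3) (p : Fin 3 → ℝ) :
    pd i (pd j f) p = pd j (pd i f) p := by
  have hd : Differentiable ℝ (fderiv ℝ f) :=
    (hf.fderiv_right (m := (⊤ : ℕ∞)) (by simp)).differentiable (by simp)
  have key : ∀ (u v : Fin 3 → ℝ),
      fderiv ℝ (fun x => fderiv ℝ f x u) p v = fderiv ℝ (fderiv ℝ f) p v u := by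
    intro u v
    rw [fderiv_clm_apply (hd p) (differentiableAt_const u)]
    simp
  have hsymm : IsSymmSndFDerivAt ℝ f p :=
    (hf.contDiffAt).isSymmSndFDerivAt (by rw [minSmoothness_of_isRCLikeNormedField]; exact WithTop.coe_le_coe.mpr (le_top : (2 : ℕ∞) ≤ ⊤))
  unfold pd
  rw [key, key, hsymm.eq]

/-- For distinct `λ₁, λ₂, λ₃` (and `λ₄ = ∞`), the Frobenius integrability condition
`α_λ ∧ dα_λ = 0` for all `λ` for the one-form
`α_λ = (λ-λ₂)(λ-λ₃) f₁ dp₁ + (λ-λ₁)(λ-λ₃) f₂ dp₂ + (λ-λ₁)(λ-λ₂) f₃ dp₃`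
holds iff `f` satisfies the Hirota equation
`(λ₂-λ₃) f₁ f₂₃ + (λ₃-λ₁) f₂ f₁₃ + (λ₁-λ₂) f₃ f₁₂ = 0`. -/
theorem hirota_integrability (f : (Fin 3 → ℝ) → ℝ) (hf : ContDiff ℝ (⊤ : ℕ∞) f)
    (l1 l2 l3 : ℝ) (h12 : l1 ≠ l2) (h13 : l1 ≠ l3) (h23 : l2 ≠ l3) :
    (∀ (l : ℝ) (p : Fin 3 → ℝ),
      let A : (Fin 3 → ℝ) → ℝ := fun x => (l - l2) * (l - l3) * pd 0 f x
      let B : (Fin 3 → ℝ) → ℝ := fun x => (l - l1) * (l - l3) * pd 1 f x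
      let C : (Fin 3 → ℝ) → ℝ := fun x => (l - l1) * (l - l2) * pd 2 f x
      -- coefficient of `dp₁ ∧ dp₂ ∧ dp₃` in `α_λ ∧ dα_λ`
      A p * (pd 1 C p - pd 2 B p)
        - B p * (pd 0 C p - pd 2 A p)
        + C p * (pd 0 B p - pd 1 A p) = 0)
    ↔ (∀ p : Fin 3 → ℝ,
        (l2 - l3) * pd 0 f p * pd 1 (pd 2 f) p
          + (l3 - l1) * pd 1 f p * pd 0 (pd 2 f) p
          + (l1 - l2) * pd 2 f p * pd 0 (pd 1 f) p = 0) := by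
  have hdf : ∀ i : Fin 3, Differentiable ℝ (pd i f) :=
    fun i => (pd_contDiff i hf).differentiable (by simp)
  have key : ∀ (l : ℝ) (p : Fin 3 → ℝ),
      ((l - l2) * (l - l3) * pd 0 f p) *
          (pd 1 (fun x => (l - l1) * (l - l2) * pd 2 f x) p
            - pd 2 (fun x => (l - l1) * (l - l3) * pd 1 f x) p)
        - ((l - l1) * (l - l3) * pd 1 f p) *
          (pd 0 (fun x => (l - l1) * (l - l2) * pd 2 f x) p
            - pd 2 (fun x => (l - l2) * (l - l3) * pd 0 f x) p)
        + ((l - l1) * (l - l2) * pd 2 f p) *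
          (pd 0 (fun x => (l - l1) * (l - l3) * pd 1 f x) p
            - pd 1 (fun x => (l - l2) * (l - l3) * pd 0 f x) p)
      = -((l - l1) * (l - l2) * (l - l3)) *
          ((l2 - l3) * pd 0 f p * pd 1 (pd 2 f) p
            + (l3 - l1) * pd 1 f p * pd 0 (pd 2 f) p
            + (l1 - l2) * pd 2 f p * pd 0 (pd 1 f) p) := by
    intro l p
    rw [pd_const_mul _ _ (hdf 2), pd_const_mul _ _ (hdf 1), pd_const_mul _ _ (hdf 2),
      pd_const_mul _ _ (hdf 0), pd_const_mul _ _ (hdf 1), pd_const_mul _ _ (hdf 0),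
      pd_comm hf 2 1, pd_comm hf 2 0, pd_comm hf 1 0]
    ring
  constructor
  · intro h p
    set l : ℝ := max (max l1 l2) l3 + 1 with hl
    have h1 : l1 < l := lt_of_le_of_lt ((le_max_left l1 l2).trans (le_max_left _ l3))
      (lt_add_one _)
    have h2 : l2 < l := lt_of_le_of_lt ((le_max_right l1 l2).trans (le_max_left _ l3))
      (lt_add_one _)
    have h3 : l3 < l := lt_of_le_of_lt (le_max_right _ l3) (lt_add_one _)
    have hE := h l p
    simp only at hE
    rw [key l p] at hE
    have hPi : -((l - l1) * (l - l2) * (l - l3)) ≠ 0 := by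
      have e1 : l - l1 ≠ 0 := sub_ne_zero.mpr h1.ne'
      have e2 : l - l2 ≠ 0 := sub_ne_zero.mpr h2.ne'
      have e3 : l - l3 ≠ 0 := sub_ne_zero.mpr h3.ne'
      simp [e1, e2, e3]
    rcases mul_eq_zero.mp hE with h' | h'
    · exact absurd h' hPi
    · exact h'
  · intro h l p
    show ((l - l2) * (l - l3) * pd 0 f p) *
          (pd 1 (fun x => (l - l1) * (l - l2) * pd 2 f x) p
            - pd 2 (fun x => (l - l1) * (l - l3) * pd 1 f x) p)
        - ((l - l1) * (l - l3) * pd 1 f p) *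
          (pd 0 (fun x => (l - l1) * (l - l2) * pd 2 f x) p
            - pd 2 (fun x => (l - l2) * (l - l3) * pd 0 f x) p)
        + ((l - l1) * (l - l2) * pd 2 f p) *
          (pd 0 (fun x => (l - l1) * (l - l3) * pd 1 f x) p
            - pd 1 (fun x => (l - l2) * (l - l3) * pd 0 f x) p) = 0
    rw [key l p, h p, mul_zero]
end

section
/- Let H : ℝ⁴ → ℝ be smooth in coordinates (q₀,q₁,q₂,q₃) and define, for each λ ∈ ℝ, the distribution D_λ spanned by the vector fields Xᵢ = ∂ᵢ - λ(∂_{i-1} + Hᵢ ∂₃) for i = 1, 2, 3, where Hᵢ = ∂H/∂qᵢ. Then D_λ is involutive (closed under Lie bracket) for every λ ∈ ℝ if and only if H satisfies the system: H₁₃ - H₂₂ + H₂ H₃₃ - H₃ H₂₃ = 0, H₀₃ - H₁₂ + H₁ H₃₃ - H₃ H₁₃ = 0, H₀₂ - H₁₁ + H₁ H₂₃ - H₂ H₁₃ = 0. -/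
/-- Partial derivative of a function on `ℝ⁴` in the `i`-th coordinate direction. -/
noncomputable def pd4 (i : Fin 4) (f : (Fin 4 → ℝ) → ℝ) (q : Fin 4 → ℝ) : ℝ :=
  fderiv ℝ f q (Pi.single i 1)

/-- Lie bracket of two vector fields on `ℝ⁴`, written componentwise:
`[X,Y]^k = Σⱼ (Xʲ ∂ⱼYᵏ - Yʲ ∂ⱼXᵏ)`. -/
noncomputable def lieB (X Y : (Fin 4 → ℝ) → (Fin 4 → ℝ)) (q : Fin 4 → ℝ) :
    Fin 4 → ℝ :=
  fun k => ∑ j : Fin 4,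
    (X q j * pd4 j (fun x => Y x k) q - Y q j * pd4 j (fun x => X x k) q)

/-- The vector fields `Xᵢ = ∂ᵢ - λ(∂_{i-1} + Hᵢ ∂₃)`, `i = 1,2,3`, spanning the
distribution `D_λ`; here `i : Fin 3` and `X_{i+1} = vf H λ i`, with
`i.succ = i+1` and `i.castSucc = i` as indices in `Fin 4`. -/
noncomputable def vf (H : (Fin 4 → ℝ) → ℝ) (l : ℝ) (i : Fin 3) :
    (Fin 4 → ℝ) → (Fin 4 → ℝ) :=
  fun q => (Pi.single (i.succ : Fin 4) 1 : Fin 4 → ℝ)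
    - l • ((Pi.single (i.castSucc : Fin 4) 1 : Fin 4 → ℝ)
        + pd4 (i.succ) H q • (Pi.single (3 : Fin 4) 1 : Fin 4 → ℝ))

noncomputable def hcrF (H : (Fin 4 → ℝ) → ℝ) (i j : Fin 3) (q : Fin 4 → ℝ) : ℝ :=
  pd4 i.castSucc (pd4 j.succ H) q - pd4 j.castSucc (pd4 i.succ H) q
  + pd4 i.succ H q * pd4 3 (pd4 j.succ H) q - pd4 j.succ H q * pd4 3 (pd4 i.succ H) q

section
variable {H : (Fin 4 → ℝ) → ℝ}

lemma hcr_contDiff_pd4 (hH : ContDiff ℝ (⊤ : ℕ∞) H) (i : Fin 4) : ContDiff ℝ (⊤ : ℕ∞) (pd4 i H) :=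
  (hH.fderiv_right (by simp)).clm_apply contDiff_const

lemma hcr_diff_pd4 (hH : ContDiff ℝ (⊤ : ℕ∞) H) (i : Fin 4) : Differentiable ℝ (pd4 i H) :=
  (hcr_contDiff_pd4 hH i).differentiable (by simp)

lemma hcr_pd4_eq (hH : ContDiff ℝ (⊤ : ℕ∞) H) (a b : Fin 4) (q : Fin 4 → ℝ) :
    pd4 a (pd4 b H) q = fderiv ℝ (fderiv ℝ H) q (Pi.single a 1) (Pi.single b 1) := by
  have hd : DifferentiableAt ℝ (fderiv ℝ H) q :=
    ((hH.fderiv_right (m := 1) (by exact WithTop.coe_le_coe.mpr le_top)).differentiable (by simp)) q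
  have : (pd4 b H) = fun x => (fderiv ℝ H x) ((fun _ => Pi.single b 1 : _ → Fin 4 → ℝ) x) := rfl
  rw [pd4, this, fderiv_clm_apply hd (differentiableAt_const _)]
  simp

lemma hcr_symm (hH : ContDiff ℝ (⊤ : ℕ∞) H) (a b : Fin 4) (q : Fin 4 → ℝ) :
    pd4 a (pd4 b H) q = pd4 b (pd4 a H) q := by
  rw [hcr_pd4_eq hH, hcr_pd4_eq hH]
  exact (hH.contDiffAt.isSymmSndFDerivAt (by rw [minSmoothness_of_isRCLikeNormedField]; exact WithTop.coe_le_coe.mpr le_top)) _ _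

lemma hcr_pd4_affine (m : Fin 4) (c1 c2 : ℝ) {g : (Fin 4 → ℝ) → ℝ}
    (hg : Differentiable ℝ g) (q : Fin 4 → ℝ) :
    pd4 m (fun x => c1 + c2 * g x) q = c2 * pd4 m g q := by
  rw [pd4, fderiv_const_add, fderiv_const_mul (hg q)]
  simp [pd4]

lemma hcr_pd4_vf (hH : ContDiff ℝ (⊤ : ℕ∞) H) (m k : Fin 4) (l : ℝ) (i : Fin 3) (q : Fin 4 → ℝ) :
    pd4 m (fun x => vf H l i x k) q
      = -(l * (Pi.single (3 : Fin 4) 1 : Fin 4 → ℝ) k) * pd4 m (pd4 i.succ H) q := by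
  have h : (fun x => vf H l i x k)
      = fun x => ((Pi.single (i.succ : Fin 4) 1 : Fin 4 → ℝ) k - l * (Pi.single (i.castSucc : Fin 4) 1 : Fin 4 → ℝ) k)
          + (-(l * (Pi.single (3 : Fin 4) 1 : Fin 4 → ℝ) k)) * pd4 i.succ H x := by
    funext x
    simp [vf]
    ring
  rw [h, hcr_pd4_affine _ _ _ (hcr_diff_pd4 hH _)]

lemma hcr_single_sum (a : Fin 4) (c : Fin 4 → ℝ) :
    ∑ m : Fin 4, (Pi.single a 1 : Fin 4 → ℝ) m * c m = c a := by
  simp [Pi.single_apply]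

lemma hcr_vf_sum (l : ℝ) (i : Fin 3) (q : Fin 4 → ℝ) (c : Fin 4 → ℝ) :
    ∑ m : Fin 4, vf H l i q m * c m
      = c i.succ - l * (c i.castSucc + pd4 i.succ H q * c (3 : Fin 4)) := by
  have h : ∀ m : Fin 4, vf H l i q m * c m
      = (Pi.single (i.succ : Fin 4) 1 : Fin 4 → ℝ) m * c m
        - l * ((Pi.single (i.castSucc : Fin 4) 1 : Fin 4 → ℝ) m * c m)
        - (l * pd4 i.succ H q) * ((Pi.single (3 : Fin 4) 1 : Fin 4 → ℝ) m * c m) := by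
    intro m; simp [vf]; ring
  simp only [h, Finset.sum_sub_distrib, ← Finset.mul_sum, hcr_single_sum]
  ring

lemma hcr_lieB (hH : ContDiff ℝ (⊤ : ℕ∞) H) (l : ℝ) (i j : Fin 3) (q : Fin 4 → ℝ) :
    lieB (vf H l i) (vf H l j) q
      = (l ^ 2 * hcrF H i j q) • (Pi.single (3 : Fin 4) (1:ℝ) : Fin 4 → ℝ) := by
  funext k
  set s : ℝ := (Pi.single (3 : Fin 4) 1 : Fin 4 → ℝ) k with hs
  have h1 : ∀ (a b : Fin 3), ∑ m : Fin 4,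
      vf H l a q m * (-(l * s) * pd4 m (pd4 b.succ H) q)
      = -(l * s) * (pd4 a.succ (pd4 b.succ H) q
          - l * (pd4 a.castSucc (pd4 b.succ H) q
              + pd4 a.succ H q * pd4 (3 : Fin 4) (pd4 b.succ H) q)) := by
    intro a b
    rw [show (∑ m : Fin 4, vf H l a q m * (-(l * s) * pd4 m (pd4 b.succ H) q))
        = -(l * s) * ∑ m : Fin 4, vf H l a q m * pd4 m (pd4 b.succ H) q by
      rw [Finset.mul_sum]; exact Finset.sum_congr rfl fun m _ => by ring]
    rw [hcr_vf_sum l a q (fun m => pd4 m (pd4 b.succ H) q)]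
  simp only [lieB, hcr_pd4_vf hH, ← hs, Finset.sum_sub_distrib, h1, Pi.smul_apply,
    smul_eq_mul, hcrF]
  linear_combination (-(l * s)) * hcr_symm hH i.succ j.succ q
end

section
variable {H : (Fin 4 → ℝ) → ℝ}

lemma hcr_forward (hH : ContDiff ℝ (⊤ : ℕ∞) H) (q : Fin 4 → ℝ) (i j : Fin 3)
    (hm : lieB (vf H 1 i) (vf H 1 j) q ∈
        Submodule.span ℝ {vf H 1 0 q, vf H 1 1 q, vf H 1 2 q}) :
    hcrF H i j q = 0 := by
  rw [hcr_lieB hH] at hm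
  rw [Submodule.mem_span_insert] at hm
  obtain ⟨a, z, hz, hv⟩ := hm
  rw [Submodule.mem_span_insert] at hz
  obtain ⟨b, w, hw, rfl⟩ := hz
  rw [Submodule.mem_span_singleton] at hw
  obtain ⟨c, rfl⟩ := hw
  have h0 := congrFun hv 0
  have h1 := congrFun hv 1
  have h2 := congrFun hv 2
  have h3 := congrFun hv 3
  simp [vf, Pi.single_apply, show ((0:Fin 3).succ : Fin 4) = 1 from rfl,
    show ((1:Fin 3).succ : Fin 4) = 2 from rfl, show ((2:Fin 3).succ : Fin 4) = 3 from rfl,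
    show ((0:Fin 3).castSucc : Fin 4) = 0 from rfl,
    show ((1:Fin 3).castSucc : Fin 4) = 1 from rfl,
    show ((2:Fin 3).castSucc : Fin 4) = 2 from rfl] at h0 h1 h2 h3
  have ha : a = 0 := by linarith
  have hb : b = 0 := by linarith
  have hc : c = 0 := by linarith
  rw [ha, hb, hc] at h3
  simpa using h3
end

/-- The distribution `D_λ = span{∂ᵢ - λ(∂_{i-1} + Hᵢ∂₃) | i = 1,2,3}` on `ℝ⁴` is
involutive (closed under Lie bracket) for every `λ ∈ ℝ` iff `H` satisfies the
four-dimensional hyper-CR system: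
`H₁₃ - H₂₂ + H₂H₃₃ - H₃H₂₃ = 0`, `H₀₃ - H₁₂ + H₁H₃₃ - H₃H₁₃ = 0`,
`H₀₂ - H₁₁ + H₁H₂₃ - H₂H₁₃ = 0`. -/
theorem veroneseWeb4_hyperCR_involutive (H : (Fin 4 → ℝ) → ℝ)
    (hH : ContDiff ℝ (⊤ : ℕ∞) H) :
    (∀ (l : ℝ) (q : Fin 4 → ℝ) (i j : Fin 3),
      lieB (vf H l i) (vf H l j) q ∈
        Submodule.span ℝ {vf H l 0 q, vf H l 1 q, vf H l 2 q})
    ↔ (∀ q : Fin 4 → ℝ,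
        (pd4 1 (pd4 3 H) q - pd4 2 (pd4 2 H) q
          + pd4 2 H q * pd4 3 (pd4 3 H) q - pd4 3 H q * pd4 2 (pd4 3 H) q = 0)
        ∧ (pd4 0 (pd4 3 H) q - pd4 1 (pd4 2 H) q
          + pd4 1 H q * pd4 3 (pd4 3 H) q - pd4 3 H q * pd4 1 (pd4 3 H) q = 0)
        ∧ (pd4 0 (pd4 2 H) q - pd4 1 (pd4 1 H) q
          + pd4 1 H q * pd4 2 (pd4 3 H) q - pd4 2 H q * pd4 1 (pd4 3 H) q = 0)) := by
  constructor
  · intro h q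
    have k12 := hcr_forward hH q 1 2 (h 1 q 1 2)
    have k02 := hcr_forward hH q 0 2 (h 1 q 0 2)
    have k01 := hcr_forward hH q 0 1 (h 1 q 0 1)
    simp only [hcrF, show ((0:Fin 3).succ : Fin 4) = 1 from rfl,
      show ((1:Fin 3).succ : Fin 4) = 2 from rfl, show ((2:Fin 3).succ : Fin 4) = 3 from rfl,
      show ((0:Fin 3).castSucc : Fin 4) = 0 from rfl,
      show ((1:Fin 3).castSucc : Fin 4) = 1 from rfl,
      show ((2:Fin 3).castSucc : Fin 4) = 2 from rfl] at k12 k02 k01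
    refine ⟨?_, ?_, ?_⟩
    · linear_combination k12 + pd4 3 H q * hcr_symm hH 3 2 q
    · linear_combination k02 + hcr_symm hH 2 1 q + pd4 3 H q * hcr_symm hH 3 1 q
    · linear_combination k01 + pd4 1 H q * hcr_symm hH 2 3 q - pd4 2 H q * hcr_symm hH 1 3 q
  · intro h l q i j
    rw [hcr_lieB hH]
    obtain ⟨e1, e2, e3⟩ := h q
    have hz : hcrF H i j q = 0 := by
      fin_cases i <;> fin_cases j <;>
        simp only [hcrF, Fin.mk_zero, Fin.mk_one,
          show (⟨2, by omega⟩ : Fin 3) = 2 from rfl,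
          show ((0:Fin 3).succ : Fin 4) = 1 from rfl,
          show ((1:Fin 3).succ : Fin 4) = 2 from rfl, show ((2:Fin 3).succ : Fin 4) = 3 from rfl,
          show ((0:Fin 3).castSucc : Fin 4) = 0 from rfl,
          show ((1:Fin 3).castSucc : Fin 4) = 1 from rfl,
          show ((2:Fin 3).castSucc : Fin 4) = 2 from rfl]
      · ring
      · linear_combination e3 + pd4 1 H q * hcr_symm hH 3 2 q - pd4 2 H q * hcr_symm hH 3 1 q
      · linear_combination e2 - hcr_symm hH 2 1 q - pd4 3 H q * hcr_symm hH 3 1 q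
      · linear_combination -e3 - pd4 1 H q * hcr_symm hH 3 2 q + pd4 2 H q * hcr_symm hH 3 1 q
      · ring
      · linear_combination e1 - pd4 3 H q * hcr_symm hH 3 2 q
      · linear_combination -e2 + hcr_symm hH 2 1 q + pd4 3 H q * hcr_symm hH 3 1 q
      · linear_combination -e1 + pd4 3 H q * hcr_symm hH 3 2 q
      · ring
    rw [hz, mul_zero, zero_smul]
    exact Submodule.zero_mem _
end
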